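/- arXiv:2010.03161 — 3 statements merged into one kernel-verified Lean document; each statement's English description precedes it below -/
import Mathlib

section
/- Consider a finite-horizon non-stationary MDP with finite state space S, finite action space A, horizon H, episode-indexed mean rewards r_h^k : S × A → [0,1] and transition kernels P_h^k(·|s,a) for episodes k = 1,…,K and steps h = 1,…,H. Define the optimal Q-values by backward recursion Q_H^{k,*}(s,a) = r_H^k(s,a), Q_h^{k,*}(s,a) = r_h^k(s,a) + Σ_{s'} P_h^k(s'|s,a) max_{a'} Q_{h+1}^{k,*}(s',a'). For each step h let Δ_{r,h} = Σ_{k=1}^{K-1} sup_{s,a} |r_h^k(s,a) − r_h^{k+1}(s,a)| and Δ_{p,h} = Σ_{k=1}^{K-1} sup_{s,a} ‖P_h^k(·|s,a) − P_h^{k+1}(·|s,a)‖_1. Then for every triple (s,a,h) and every 1 ≤ k₁ < k₂ ≤ K, |Q_h^{k₁,*}(s,a) − Q_h^{k₂,*}(s,a)| ≤ Σ_{h'=h}^{H} Δ_{r,h'} + H · Σ_{h'=h}^{H} Δ_{p,h'}. -/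
/-!
Compare two MDPs step by step. The Bellman recursion writes `Q_h - Q'_h` as the reward gap at
step `h` plus `P V - P' V'` with `V = max_a Q_{h+1}`, and
`P V - P' V' = (P - P') V + P' (V - V')`. Since rewards lie in `[0, 1]`, `0 ≤ V ≤ H`, so the first
term is at most `H ‖P - P'‖₁`; the second is a convex combination of `V - V'`, bounded by backward
induction on `h`. This bounds the drift between consecutive episodes, and the triangle inequality
along `k₁, k₁ + 1, …, k₂` sums these drifts.
-/

open Finset

theorem abs_iSup_sub_iSup_le {ι : Type*} [Finite ι] (f g : ι → ℝ) :
    |(⨆ i, f i) - ⨆ i, g i| ≤ ⨆ i, |f i - g i| := by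
  cases isEmpty_or_nonempty ι
  · simp
  rw [abs_sub_le_iff, sub_le_iff_le_add, sub_le_iff_le_add]
  constructor <;> refine ciSup_le fun i => ?_
  · calc f i ≤ |f i - g i| + g i := by linarith [le_abs_self (f i - g i)]
      _ ≤ _ := add_le_add (Finite.le_ciSup (fun i => |f i - g i|) i) (Finite.le_ciSup g i)
  · calc g i ≤ |f i - g i| + f i := by linarith [neg_abs_le (f i - g i)]
      _ ≤ _ := add_le_add (Finite.le_ciSup (fun i => |f i - g i|) i) (Finite.le_ciSup f i)

theorem abs_sum_mul_sub_sum_mul_le {ι : Type*} [Fintype ι] {p q v w : ι → ℝ} {C D : ℝ}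
    (hq0 : ∀ i, 0 ≤ q i) (hq1 : ∑ i, q i = 1) (hv : ∀ i, |v i| ≤ C)
    (hvw : ∀ i, |v i - w i| ≤ D) :
    |∑ i, p i * v i - ∑ i, q i * w i| ≤ (∑ i, |p i - q i|) * C + D := by
  have hsplit : ∑ i, p i * v i - ∑ i, q i * w i =
      ∑ i, ((p i - q i) * v i + q i * (v i - w i)) := by
    rw [← sum_sub_distrib]
    exact sum_congr rfl fun i _ => by ring
  have hterm : ∀ i, |(p i - q i) * v i + q i * (v i - w i)| ≤ |p i - q i| * C + q i * D :=
    fun i => calc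
      _ ≤ |p i - q i| * |v i| + q i * |v i - w i| := by
        rw [← abs_of_nonneg (hq0 i), ← abs_mul, ← abs_mul, abs_of_nonneg (hq0 i)]
        exact abs_add_le _ _
      _ ≤ _ := add_le_add (mul_le_mul_of_nonneg_left (hv i) (abs_nonneg _))
          (mul_le_mul_of_nonneg_left (hvw i) (hq0 i))
  calc _ ≤ ∑ i, (|p i - q i| * C + q i * D) := by
        rw [hsplit]
        exact (abs_sum_le_sum_abs _ _).trans (sum_le_sum fun i _ => hterm i)
    _ = _ := by rw [sum_add_distrib, ← sum_mul, ← sum_mul, hq1, one_mul]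

section MDP

variable {S A : Type*}

noncomputable def rewardGap (r r' : ℕ → S → A → ℝ) (h : ℕ) : ℝ :=
  ⨆ s, ⨆ a, |r h s a - r' h s a|

theorem rewardGap_nonneg (r r' : ℕ → S → A → ℝ) (h : ℕ) : 0 ≤ rewardGap r r' h :=
  Real.iSup_nonneg fun _ => Real.iSup_nonneg fun _ => abs_nonneg _

theorem abs_sub_le_rewardGap [Finite S] [Finite A] (r r' : ℕ → S → A → ℝ) (h : ℕ)
    (s : S) (a : A) : |r h s a - r' h s a| ≤ rewardGap r r' h :=
  Finite.le_ciSup_of_le s (Finite.le_ciSup (fun a => |r h s a - r' h s a|) a)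

variable [Fintype S]

noncomputable def transitionGap (P P' : ℕ → S → A → S → ℝ) (h : ℕ) : ℝ :=
  ⨆ s, ⨆ a, ∑ s', |P h s a s' - P' h s a s'|

theorem transitionGap_nonneg (P P' : ℕ → S → A → S → ℝ) (h : ℕ) :
    0 ≤ transitionGap P P' h :=
  Real.iSup_nonneg fun _ => Real.iSup_nonneg fun _ => sum_nonneg fun _ _ => abs_nonneg _

theorem sum_abs_sub_le_transitionGap [Finite A] (P P' : ℕ → S → A → S → ℝ) (h : ℕ)
    (s : S) (a : A) : ∑ s', |P h s a s' - P' h s a s'| ≤ transitionGap P P' h :=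
  Finite.le_ciSup_of_le s (Finite.le_ciSup (fun a => ∑ s', |P h s a s' - P' h s a s'|) a)

structure IsOptimalQ (H : ℕ) (r : ℕ → S → A → ℝ) (P : ℕ → S → A → S → ℝ)
    (Q : ℕ → S → A → ℝ) : Prop where
  terminal : ∀ s a, Q H s a = r H s a
  bellman : ∀ h, 1 ≤ h → h < H → ∀ s a,
    Q h s a = r h s a + ∑ s', P h s a s' * ⨆ a', Q (h + 1) s' a'

variable {H : ℕ} {r r' : ℕ → S → A → ℝ} {P P' : ℕ → S → A → S → ℝ} {Q Q' : ℕ → S → A → ℝ}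

theorem IsOptimalQ.mem_Icc (hQ : IsOptimalQ H r P Q)
    (hr0 : ∀ h s a, 0 ≤ r h s a) (hr1 : ∀ h s a, r h s a ≤ 1)
    (hP0 : ∀ h s a s', 0 ≤ P h s a s') (hP1 : ∀ h s a, ∑ s', P h s a s' = 1)
    {h : ℕ} (h1 : 1 ≤ h) (hH : h ≤ H) (s : S) (a : A) :
    Q h s a ∈ Set.Icc 0 ((H : ℝ) + 1 - h) := by
  induction hH using Nat.decreasingInduction generalizing s a with
  | self =>
    rw [hQ.terminal]
    exact ⟨hr0 H s a, by linarith [hr1 H s a]⟩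
  | of_succ h hlt ih =>
    simp only [Nat.cast_add_one] at ih
    have hH : (h : ℝ) < H := by exact_mod_cast hlt
    have hV : ∀ s', ⨆ a', Q (h + 1) s' a' ∈ Set.Icc 0 ((H : ℝ) - h) := fun s' =>
      ⟨Real.iSup_nonneg fun a' => (ih (by omega) s' a').1,
        Real.iSup_le (fun a' => by linarith [(ih (by omega) s' a').2]) (by linarith)⟩
    have hPV : ∑ s', P h s a s' * ⨆ a', Q (h + 1) s' a' ∈ Set.Icc 0 ((H : ℝ) - h) :=
      (convex_Icc _ _).sum_mem (fun s' _ => hP0 h s a s') (hP1 h s a) fun s' _ => hV s'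
    rw [hQ.bellman h h1 hlt]
    exact ⟨by linarith [hr0 h s a, hPV.1], by linarith [hr1 h s a, hPV.2]⟩

theorem IsOptimalQ.abs_sub_le [Finite A] (hQ : IsOptimalQ H r P Q)
    (hQ' : IsOptimalQ H r' P' Q')
    (hQ_mem : ∀ h, 1 ≤ h → h ≤ H → ∀ s a, Q h s a ∈ Set.Icc 0 (H : ℝ))
    (hP0' : ∀ h s a s', 0 ≤ P' h s a s') (hP1' : ∀ h s a, ∑ s', P' h s a s' = 1)
    {h : ℕ} (h1 : 1 ≤ h) (hH : h ≤ H) (s : S) (a : A) :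
    |Q h s a - Q' h s a| ≤
      ∑ h' ∈ Icc h H, rewardGap r r' h' + H * ∑ h' ∈ Icc h H, transitionGap P P' h' := by
  induction hH using Nat.decreasingInduction generalizing s a with
  | self =>
    rw [hQ.terminal, hQ'.terminal, Icc_self, sum_singleton, sum_singleton]
    exact le_add_of_le_of_nonneg (abs_sub_le_rewardGap r r' H s a)
      (mul_nonneg H.cast_nonneg (transitionGap_nonneg P P' H))
  | of_succ h hlt ih =>
    have : Nonempty A := ⟨a⟩
    have hV : ∀ s', |⨆ a', Q (h + 1) s' a'| ≤ H := fun s' =>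
      abs_le.2 ⟨by linarith [Real.iSup_nonneg fun a' => (hQ_mem (h + 1) (by omega) hlt s' a').1],
        Real.iSup_le (fun a' => (hQ_mem (h + 1) (by omega) hlt s' a').2) H.cast_nonneg⟩
    have hVV' := fun s' => (abs_iSup_sub_iSup_le (Q (h + 1) s') (Q' (h + 1) s')).trans
      (ciSup_le fun a' => ih (by omega) s' a')
    have hPV := abs_sum_mul_sub_sum_mul_le (p := P h s a) (hP0' h s a) (hP1' h s a) hV hVV'
    rw [Icc_add_one_left_eq_Ioc] at hPV
    rw [hQ.bellman h h1 hlt, hQ'.bellman h h1 hlt, ← add_sum_Ioc_eq_sum_Icc hlt.le,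
      ← add_sum_Ioc_eq_sum_Icc hlt.le]
    calc _ ≤ |r h s a - r' h s a| + |(∑ s', P h s a s' * ⨆ a', Q (h + 1) s' a') -
            ∑ s', P' h s a s' * ⨆ a', Q' (h + 1) s' a'| := by
          rw [add_sub_add_comm]; exact abs_add_le _ _
      _ ≤ rewardGap r r' h + (transitionGap P P' h * H + (∑ h' ∈ Ioc h H, rewardGap r r' h' +
            H * ∑ h' ∈ Ioc h H, transitionGap P P' h')) :=
          add_le_add (abs_sub_le_rewardGap r r' h s a) (hPV.trans (add_le_add_left
            (mul_le_mul_of_nonneg_right (sum_abs_sub_le_transitionGap P P' h s a) H.cast_nonneg) _))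
      _ = _ := by ring

end MDP

theorem optimalQ_drift_general
    {S A : Type*} [Fintype S] [Fintype A]
    (K H : ℕ)
    (r : ℕ → ℕ → S → A → ℝ) (P : ℕ → ℕ → S → A → S → ℝ)
    (hr0 : ∀ k h s a, 0 ≤ r k h s a) (hr1 : ∀ k h s a, r k h s a ≤ 1)
    (hP0 : ∀ k h s a s', 0 ≤ P k h s a s')
    (hP1 : ∀ k h s a, ∑ s', P k h s a s' = 1)
    (Q : ℕ → ℕ → S → A → ℝ)
    (hQH : ∀ k s a, Q k H s a = r k H s a)
    (hQrec : ∀ k h, 1 ≤ h → h < H → ∀ s a,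
        Q k h s a = r k h s a + ∑ s', P k h s a s' * (⨆ a', Q k (h + 1) s' a'))
    (Δr Δp : ℕ → ℝ)
    (hΔr : ∀ h, Δr h = ∑ k ∈ Finset.Ico 1 K, ⨆ s, ⨆ a, |r k h s a - r (k + 1) h s a|)
    (hΔp : ∀ h, Δp h = ∑ k ∈ Finset.Ico 1 K,
        ⨆ s, ⨆ a, ∑ s', |P k h s a s' - P (k + 1) h s a s'|) :
    ∀ (s : S) (a : A) (h k₁ k₂ : ℕ), 1 ≤ h → h ≤ H → 1 ≤ k₁ → k₁ < k₂ → k₂ ≤ K →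
      |Q k₁ h s a - Q k₂ h s a| ≤
        (∑ h' ∈ Finset.Icc h H, Δr h') + (H : ℝ) * ∑ h' ∈ Finset.Icc h H, Δp h' := by
  intro s a h k₁ k₂ h1 hH hk₁ hk₁₂ hk₂
  have hQ : ∀ k, IsOptimalQ H (r k) (P k) (Q k) := fun k => ⟨hQH k, hQrec k⟩
  have hQ_mem : ∀ k h, 1 ≤ h → h ≤ H → ∀ s a, Q k h s a ∈ Set.Icc 0 (H : ℝ) :=
    fun k h h1 hH s a => Set.Icc_subset_Icc le_rfl (by linarith [(Nat.one_le_cast (α := ℝ)).2 h1])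
      ((hQ k).mem_Icc (hr0 k) (hr1 k) (hP0 k) (hP1 k) h1 hH s a)
  set drift : ℕ → ℝ := fun k => ∑ h' ∈ Icc h H, rewardGap (r k) (r (k + 1)) h' +
    H * ∑ h' ∈ Icc h H, transitionGap (P k) (P (k + 1)) h'
  have hdrift_nonneg : ∀ k, 0 ≤ drift k := fun k =>
    add_nonneg (sum_nonneg fun _ _ => rewardGap_nonneg _ _ _)
      (mul_nonneg H.cast_nonneg (sum_nonneg fun _ _ => transitionGap_nonneg _ _ _))
  calc |Q k₁ h s a - Q k₂ h s a|
      ≤ ∑ k ∈ Ico k₁ k₂, |Q k h s a - Q (k + 1) h s a| := by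
        simpa only [Real.dist_eq] using dist_le_Ico_sum_dist (fun k => Q k h s a) hk₁₂.le
    _ ≤ ∑ k ∈ Ico k₁ k₂, drift k := sum_le_sum fun k _ =>
        (hQ k).abs_sub_le (hQ (k + 1)) (hQ_mem k) (hP0 (k + 1)) (hP1 (k + 1)) h1 hH s a
    _ ≤ ∑ k ∈ Ico 1 K, drift k :=
        sum_le_sum_of_subset_of_nonneg (Ico_subset_Ico hk₁ hk₂) fun k _ _ => hdrift_nonneg k
    _ = _ := by
        simp only [drift, sum_add_distrib, ← mul_sum, hΔr, hΔp]
        rw [sum_comm, sum_comm (s := Ico 1 K)]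
        rfl

/-- Drift of optimal Q-values in a non-stationary finite-horizon MDP: for any
state-action pair and step `h`, optimal Q-values of two episodes differ by at
most the cumulative reward variation plus `H` times the cumulative transition
variation over steps `h, …, H`. -/
theorem optimalQ_drift
    {S A : Type*} [Fintype S] [Fintype A] [Nonempty S] [Nonempty A]
    (K H : ℕ) (hK : 1 ≤ K) (hH : 1 ≤ H)
    (r : ℕ → ℕ → S → A → ℝ) (P : ℕ → ℕ → S → A → S → ℝ)
    (hr0 : ∀ k h s a, 0 ≤ r k h s a) (hr1 : ∀ k h s a, r k h s a ≤ 1)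
    (hP0 : ∀ k h s a s', 0 ≤ P k h s a s')
    (hP1 : ∀ k h s a, ∑ s', P k h s a s' = 1)
    (Q : ℕ → ℕ → S → A → ℝ)
    (hQH : ∀ k s a, Q k H s a = r k H s a)
    (hQrec : ∀ k h, 1 ≤ h → h < H → ∀ s a,
        Q k h s a = r k h s a + ∑ s', P k h s a s' * (⨆ a', Q k (h + 1) s' a'))
    (Δr Δp : ℕ → ℝ)
    (hΔr : ∀ h, Δr h = ∑ k ∈ Finset.Ico 1 K, ⨆ s, ⨆ a, |r k h s a - r (k + 1) h s a|)
    (hΔp : ∀ h, Δp h = ∑ k ∈ Finset.Ico 1 K,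
        ⨆ s, ⨆ a, ∑ s', |P k h s a s' - P (k + 1) h s a s'|) :
    ∀ (s : S) (a : A) (h k₁ k₂ : ℕ), 1 ≤ h → h ≤ H → 1 ≤ k₁ → k₁ < k₂ → k₂ ≤ K →
      |Q k₁ h s a - Q k₂ h s a| ≤
        (∑ h' ∈ Finset.Icc h H, Δr h') + (H : ℝ) * ∑ h' ∈ Finset.Icc h H, Δp h' :=
  optimalQ_drift_general K H r P hr0 hr1 hP0 hP1 Q hQH hQrec Δr Δp hΔr hΔp
end

section
/- Let H ≥ 1 be an integer, e_1 = H, and e_{i+1} = ⌊(1 + 1/H) e_i⌋ for i ≥ 1. For any J ≥ 1, letting w = Σ_{j=1}^{J} e_j, one has e_J ≤ 2w/H + 3H. -/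
/-- The last stage length is bounded by `2 w / H + 3 H`, where `w` is the sum
of all stage lengths `e_1, …, e_J` with `e_1 = H`, `e_{i+1} = ⌊(1+1/H) e_i⌋`. -/
theorem last_stage_length_bound
    (H : ℕ) (hH : 1 ≤ H) (e : ℕ → ℕ)
    (he1 : e 1 = H)
    (herec : ∀ i, 1 ≤ i → e (i + 1) = ⌊(1 + 1 / (H : ℝ)) * (e i : ℝ)⌋₊)
    (J : ℕ) (hJ : 1 ≤ J) (w : ℝ)
    (hw : w = ∑ j ∈ Finset.Icc 1 J, (e j : ℝ)) :
    (e J : ℝ) ≤ 2 * w / H + 3 * H := by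
  have hHpos : (0:ℝ) < H := by exact_mod_cast hH
  -- each step increases by at most e i / H
  have step : ∀ i, 1 ≤ i → (e (i+1) : ℝ) - e i ≤ (e i : ℝ) / H := by
    intro i hi
    have h1 : (e (i+1) : ℝ) ≤ (1 + 1 / (H : ℝ)) * (e i : ℝ) := by
      rw [herec i hi]
      exact Nat.floor_le (by positivity)
    have h2 : (1 + 1/(H:ℝ)) * (e i : ℝ) = (e i : ℝ) + (e i : ℝ) / H := by ring
    linarith
  -- telescoping sum
  have htel : ∑ i ∈ Finset.range (J-1), ((e (i+1+1) : ℝ) - e (i+1))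
      = (e J : ℝ) - e 1 := by
    have := Finset.sum_range_sub (f := fun n => (e (n+1) : ℝ)) (J-1)
    simpa [Nat.sub_add_cancel hJ, he1] using this
  have hsum1 : ∑ i ∈ Finset.range (J-1), (e (i+1) : ℝ)
      = ∑ j ∈ Finset.Ico 1 J, (e j : ℝ) := by
    rw [Finset.sum_Ico_eq_sum_range]
    simp [add_comm]
  have hsub : ∑ j ∈ Finset.Ico 1 J, (e j : ℝ) ≤ w := by
    rw [hw]
    apply Finset.sum_le_sum_of_subset_of_nonneg
    · intro x hx
      simp only [Finset.mem_Ico, Finset.mem_Icc] at hx ⊢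
      omega
    · intros; positivity
  have hkey : (e J : ℝ) - H ≤ w / H := by
    rw [show ((e 1 : ℕ) : ℝ) = (H : ℝ) from by rw [he1]] at htel
    rw [← htel]
    have h1 : ∑ i ∈ Finset.range (J-1), ((e (i+1+1) : ℝ) - e (i+1))
        ≤ ∑ i ∈ Finset.range (J-1), (e (i+1) : ℝ) / H :=
      Finset.sum_le_sum (fun i _ => step (i+1) (by omega))
    have h2 : ∑ i ∈ Finset.range (J-1), (e (i+1) : ℝ) / H
        = (∑ i ∈ Finset.range (J-1), (e (i+1) : ℝ)) / H := by
      rw [Finset.sum_div]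
    calc _ ≤ (∑ i ∈ Finset.range (J-1), (e (i+1) : ℝ)) / H := by rw [← h2]; exact h1
      _ ≤ w / H := by
          gcongr
          rw [hsum1]; exact hsub
  have hwnn : 0 ≤ w := by
    rw [hw]; positivity
  have : (e J : ℝ) ≤ w / H + H := by linarith
  have hdiv : w / H ≤ 2 * w / H := by
    gcongr
    linarith
  linarith
end

section
/- Let H ≥ 1 be an integer, e_1 = H, and e_{i+1} = ⌊(1 + 1/H) e_i⌋ for i ≥ 1. For any J ≥ 1, letting w = Σ_{j=1}^{J} e_j, one has Σ_{j=1}^{J} √(e_j) ≤ 10 √(wH). -/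
/-!
Writing `e (i + 1) = e i + ⌊e i / H⌋` with `⌊e i / H⌋ ≥ 1`, each stage is at most
`2 H` times its own increment, so by induction the stages before `n + 1` sum to at most
`2 H e (n + 1)`: the stages grow geometrically. With that bound, adding one stage to the
sum of square roots keeps it below `10 √(w H)`.
-/

open Finset

theorem Nat.floor_one_add_one_div_mul_natCast (H n : ℕ) :
    ⌊(1 + 1 / (H : ℝ)) * n⌋₊ = n + n / H := by
  rw [show (1 + 1 / (H : ℝ)) * n = n / H + n by ring, Nat.floor_add_natCast (by positivity),
    Nat.floor_div_eq_div, Nat.add_comm]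

theorem Nat.le_two_mul_mul_div {n H : ℕ} (hH : 0 < H) (hn : H ≤ n) : n ≤ 2 * H * (n / H) := by
  have hq : H ≤ n / H * H := Nat.le_mul_of_pos_left H (Nat.div_pos hn hH)
  have hlt := Nat.lt_div_mul_add (a := n) hH
  nlinarith

/-- After squaring, the cross term `20 √(S H) √a` is at most `40 H a` because
`S H a ≤ 2 H² a²`, and the new term `100 a H` absorbs it. -/
theorem ten_mul_sqrt_add_sqrt_le {S a H : ℝ} (hS : 0 ≤ S) (ha : 0 ≤ a) (hH : 1 ≤ H)
    (hSa : S ≤ 2 * H * a) : 10 * √(S * H) + √a ≤ 10 * √((S + a) * H) := by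
  have hu := Real.sq_sqrt (mul_nonneg hS (by linarith : (0 : ℝ) ≤ H))
  have hv := Real.sq_sqrt ha
  have hw := Real.sq_sqrt (mul_nonneg (add_nonneg hS ha) (by linarith : (0 : ℝ) ≤ H))
  have hcross : √(S * H) * √a ≤ 2 * H * a := by
    rw [← Real.sqrt_mul (by positivity), Real.sqrt_le_left (by positivity)]
    nlinarith
  rw [← pow_le_pow_iff_left₀ (by positivity) (by positivity) two_ne_zero]
  nlinarith

theorem sum_sqrt_le_of_sum_le_two_mul {x : ℕ → ℝ} {H : ℝ} (hH : 1 ≤ H) (hx : ∀ j, 0 ≤ x j)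
    (hsum : ∀ n, ∑ j ∈ Icc 1 n, x j ≤ 2 * H * x (n + 1)) (K : ℕ) :
    ∑ j ∈ Icc 1 K, √(x j) ≤ 10 * √((∑ j ∈ Icc 1 K, x j) * H) := by
  induction K with
  | zero => simp
  | succ n ih =>
    rw [sum_Icc_succ_top (by omega), sum_Icc_succ_top (by omega)]
    calc ∑ j ∈ Icc 1 n, √(x j) + √(x (n + 1))
        ≤ 10 * √((∑ j ∈ Icc 1 n, x j) * H) + √(x (n + 1)) := by gcongr
      _ ≤ _ := ten_mul_sqrt_add_sqrt_le (sum_nonneg fun j _ ↦ hx j) (hx _) hH (hsum n)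

structure IsStageSeq (H : ℕ) (e : ℕ → ℕ) : Prop where
  one : e 1 = H
  succ : ∀ i, 1 ≤ i → e (i + 1) = e i + e i / H

namespace IsStageSeq

variable {H : ℕ} {e : ℕ → ℕ}

theorem le_apply (he : IsStageSeq H e) {i : ℕ} (hi : 1 ≤ i) : H ≤ e i := by
  induction i, hi using Nat.le_induction with
  | base => exact he.one.ge
  | succ n hn ih => exact (he.succ n hn).symm ▸ ih.trans (Nat.le_add_right _ _)

theorem sum_Icc_le_two_mul (he : IsStageSeq H e) (hH : 0 < H) (n : ℕ) :
    ∑ j ∈ Icc 1 n, e j ≤ 2 * H * e (n + 1) := by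
  induction n with
  | zero => simp
  | succ n ih =>
    have hgrowth := Nat.le_two_mul_mul_div hH (he.le_apply (by omega : 1 ≤ n + 1))
    rw [sum_Icc_succ_top (by omega), he.succ (n + 1) (by omega)]
    nlinarith

end IsStageSeq

theorem sqrt_stage_sum_bound_general
    (H : ℕ) (hH : 1 ≤ H) (e : ℕ → ℕ)
    (he1 : e 1 = H)
    (herec : ∀ i, 1 ≤ i → e (i + 1) = ⌊(1 + 1 / (H : ℝ)) * (e i : ℝ)⌋₊)
    (J : ℕ) (w : ℝ)
    (hw : w = ∑ j ∈ Finset.Icc 1 J, (e j : ℝ)) :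
    ∑ j ∈ Finset.Icc 1 J, Real.sqrt (e j) ≤ 10 * Real.sqrt (w * H) := by
  have he : IsStageSeq H e :=
    ⟨he1, fun i hi ↦ (herec i hi).trans (Nat.floor_one_add_one_div_mul_natCast H (e i))⟩
  have hsum (n : ℕ) : ∑ j ∈ Icc 1 n, (e j : ℝ) ≤ 2 * H * e (n + 1) := by
    exact_mod_cast he.sum_Icc_le_two_mul hH n
  rw [hw]
  exact sum_sqrt_le_of_sum_le_two_mul (by exact_mod_cast hH) (fun j ↦ by positivity) hsum J

/-- Summation estimate for the stage lengths `e_1 = H`,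
`e_{i+1} = ⌊(1+1/H) e_i⌋`: the sum of square roots of the stage lengths is at
most `10 √(wH)`, where `w` is the sum of the stage lengths. -/
theorem sqrt_stage_sum_bound
    (H : ℕ) (hH : 1 ≤ H) (e : ℕ → ℕ)
    (he1 : e 1 = H)
    (herec : ∀ i, 1 ≤ i → e (i + 1) = ⌊(1 + 1 / (H : ℝ)) * (e i : ℝ)⌋₊)
    (J : ℕ) (hJ : 1 ≤ J) (w : ℝ)
    (hw : w = ∑ j ∈ Finset.Icc 1 J, (e j : ℝ)) :
    ∑ j ∈ Finset.Icc 1 J, Real.sqrt (e j) ≤ 10 * Real.sqrt (w * H) :=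
  sqrt_stage_sum_bound_general H hH e he1 herec J w hw
end
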